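/- arXiv:2208.09296 — 4 statements merged into one kernel-verified Lean document; each statement's English description precedes it below -/
import Mathlib

section
/- Let S be the subset of the complex projective line P(C^2) consisting of the eight points with homogeneous coordinates [1:0], [1:1], [1:-1], [2:1], [1:3], [3:2], [5:1], [1:-7]. If g is an invertible 2x2 complex matrix whose induced map on P(C^2) sends the set S onto itself, then the induced map on P(C^2) is the identity (equivalently, g is a scalar matrix). -/
open Projectivization
open scoped LinearAlgebra.Projectivization

/-- The point of the complex projective line with homogeneous coordinates `[a : b]`. -/
noncomputable def ptP1 (a b : ℂ) (h : ¬(a = 0 ∧ b = 0)) : ℙ ℂ (Fin 2 → ℂ) :=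
  Projectivization.mk ℂ ![a, b] (by
    intro hz
    exact h ⟨by simpa using congrFun hz 0, by simpa using congrFun hz 1⟩)

/-- The eight points `[1:0], [1:1], [1:-1], [2:1], [1:3], [3:2], [5:1], [1:-7]` of `ℙ¹(ℂ)`. -/
noncomputable def eightPts : Set (ℙ ℂ (Fin 2 → ℂ)) :=
  {ptP1 1 0 (by norm_num), ptP1 1 1 (by norm_num), ptP1 1 (-1) (by norm_num),
   ptP1 2 1 (by norm_num), ptP1 1 3 (by norm_num), ptP1 3 2 (by norm_num),
   ptP1 5 1 (by norm_num), ptP1 1 (-7) (by norm_num)}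

/-- Integer homogeneous coordinates of the eight points. -/
def crossList : List (ℤ × ℤ) := [(1,0),(1,1),(1,-1),(2,1),(1,3),(3,2),(5,1),(1,-7)]

theorem zlem : ∀ w0 ∈ crossList, ∀ w1 ∈ crossList, ∀ w2 ∈ crossList,
    w0.1*w1.2 - w0.2*w1.1 ≠ 0 → w0.1*w2.2 - w0.2*w2.1 ≠ 0 → w1.1*w2.2 - w1.2*w2.1 ≠ 0 →
    (∀ w ∈ crossList, ∃ u ∈ crossList,
      (w0.1*(w.1-w.2)*(w1.1*w2.2 - w1.2*w2.1) + w1.1*w.2*(2*(w0.1*w2.2 - w0.2*w2.1))) * u.2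
      = (w0.2*(w.1-w.2)*(w1.1*w2.2 - w1.2*w2.1) + w1.2*w.2*(2*(w0.1*w2.2 - w0.2*w2.1))) * u.1) →
    (w0 = (1,0) ∧ w1 = (1,1) ∧ w2 = (1,-1)) := by decide

lemma ptP1_eq_iff (x y u v : ℂ) (h1 : ¬(x = 0 ∧ y = 0)) (h2 : ¬(u = 0 ∧ v = 0)) :
    ptP1 x y h1 = ptP1 u v h2 ↔ ∃ μ : ℂ, μ ≠ 0 ∧ x = μ * u ∧ y = μ * v := by
  unfold ptP1
  rw [Projectivization.mk_eq_mk_iff]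
  constructor
  · rintro ⟨s, hs⟩
    refine ⟨s, s.ne_zero, ?_, ?_⟩
    · simpa [Units.smul_def] using (congrFun hs 0).symm
    · simpa [Units.smul_def] using (congrFun hs 1).symm
  · rintro ⟨μ, hμ, hx, hy⟩
    refine ⟨Units.mk0 μ hμ, ?_⟩
    funext i
    fin_cases i <;> simp [hx, hy]

lemma mem_eightPts_iff (x y : ℂ) (h : ¬(x = 0 ∧ y = 0)) :
    ptP1 x y h ∈ eightPts ↔
      ∃ w ∈ crossList, ∃ μ : ℂ, μ ≠ 0 ∧ x = μ * w.1 ∧ y = μ * w.2 := by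
  constructor
  · intro hmem
    simp only [eightPts, Set.mem_insert_iff, Set.mem_singleton_iff] at hmem
    rcases hmem with h'|h'|h'|h'|h'|h'|h'|h' <;> rw [ptP1_eq_iff] at h' <;>
      obtain ⟨μ, hμ, hx, hy⟩ := h'
    · exact ⟨(1,0), by decide, μ, hμ, by push_cast; exact hx, by push_cast; exact hy⟩
    · exact ⟨(1,1), by decide, μ, hμ, by push_cast; exact hx, by push_cast; exact hy⟩
    · exact ⟨(1,-1), by decide, μ, hμ, by push_cast; exact hx, by push_cast; exact hy⟩
    · exact ⟨(2,1), by decide, μ, hμ, by push_cast; exact hx, by push_cast; exact hy⟩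
    · exact ⟨(1,3), by decide, μ, hμ, by push_cast; exact hx, by push_cast; exact hy⟩
    · exact ⟨(3,2), by decide, μ, hμ, by push_cast; exact hx, by push_cast; exact hy⟩
    · exact ⟨(5,1), by decide, μ, hμ, by push_cast; exact hx, by push_cast; exact hy⟩
    · exact ⟨(1,-7), by decide, μ, hμ, by push_cast; exact hx, by push_cast; exact hy⟩
  · rintro ⟨w, hw, μ, hμ, hx, hy⟩
    simp only [eightPts, Set.mem_insert_iff, Set.mem_singleton_iff]
    fin_cases hw <;> push_cast at hx hy
    · exact Or.inl ((ptP1_eq_iff _ _ _ _ _ _).2 ⟨μ, hμ, hx, hy⟩)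
    · exact Or.inr <| Or.inl ((ptP1_eq_iff _ _ _ _ _ _).2 ⟨μ, hμ, hx, hy⟩)
    · exact Or.inr <| Or.inr <| Or.inl ((ptP1_eq_iff _ _ _ _ _ _).2 ⟨μ, hμ, hx, hy⟩)
    · exact Or.inr <| Or.inr <| Or.inr <| Or.inl ((ptP1_eq_iff _ _ _ _ _ _).2 ⟨μ, hμ, hx, hy⟩)
    · exact Or.inr <| Or.inr <| Or.inr <| Or.inr <| Or.inl
        ((ptP1_eq_iff _ _ _ _ _ _).2 ⟨μ, hμ, hx, hy⟩)
    · exact Or.inr <| Or.inr <| Or.inr <| Or.inr <| Or.inr <| Or.inl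
        ((ptP1_eq_iff _ _ _ _ _ _).2 ⟨μ, hμ, hx, hy⟩)
    · exact Or.inr <| Or.inr <| Or.inr <| Or.inr <| Or.inr <| Or.inr <| Or.inl
        ((ptP1_eq_iff _ _ _ _ _ _).2 ⟨μ, hμ, hx, hy⟩)
    · exact Or.inr <| Or.inr <| Or.inr <| Or.inr <| Or.inr <| Or.inr <| Or.inr
        ((ptP1_eq_iff _ _ _ _ _ _).2 ⟨μ, hμ, hx, hy⟩)

/-- If an invertible 2×2 complex matrix maps the eight points
`[1:0], [1:1], [1:-1], [2:1], [1:3], [3:2], [5:1], [1:-7]` of the complex projective line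
onto themselves, then it induces the identity map on the projective line. -/
theorem no_nontrivial_automorphism_of_eight_points
    (g : Matrix (Fin 2) (Fin 2) ℂ) (hg : Function.Injective g.mulVecLin)
    (hS : Projectivization.map g.mulVecLin hg '' eightPts = eightPts) :
    ∀ p : ℙ ℂ (Fin 2 → ℂ), Projectivization.map g.mulVecLin hg p = p := by
  classical
  have hmv : ∀ x y : ℂ,
      g.mulVecLin ![x, y] = ![g 0 0 * x + g 0 1 * y, g 1 0 * x + g 1 1 * y] := by
    intro x y
    funext i
    fin_cases i <;>
      simp [Matrix.mulVecLin_apply, Matrix.mulVec, dotProduct, Fin.sum_univ_two,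
        Matrix.vecHead, Matrix.vecTail]
  -- determinant nonzero
  have hdet : g 0 0 * g 1 1 - g 0 1 * g 1 0 ≠ 0 := by
    have h1 : Function.Injective g.mulVec := by
      simpa [Matrix.coe_mulVecLin] using hg
    have h2 : IsUnit g := Matrix.mulVec_injective_iff_isUnit.mp h1
    have h3 : g.det ≠ 0 := ((Matrix.isUnit_iff_isUnit_det g).mp h2).ne_zero
    rwa [Matrix.det_fin_two] at h3
  -- extraction of images
  have himg : ∀ (x y : ℂ) (h : ¬(x = 0 ∧ y = 0)), ptP1 x y h ∈ eightPts →
      ∃ w ∈ crossList, ∃ μ : ℂ, μ ≠ 0 ∧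
        μ * w.1 = g 0 0 * x + g 0 1 * y ∧ μ * w.2 = g 1 0 * x + g 1 1 * y := by
    intro x y h hmem
    have h2 : Projectivization.map g.mulVecLin hg (ptP1 x y h) ∈ eightPts :=
      hS ▸ Set.mem_image_of_mem _ hmem
    unfold ptP1 at h2
    rw [Projectivization.map_mk] at h2
    have hvnz : ¬((g 0 0 * x + g 0 1 * y) = 0 ∧ (g 1 0 * x + g 1 1 * y) = 0) := by
      rintro ⟨ha, hb⟩
      have h0 : g.mulVecLin ![x, y] = 0 := by
        rw [hmv]; funext i; fin_cases i <;> simpa [ha, hb]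
      have hxy0 : (![x, y] : Fin 2 → ℂ) = 0 := by
        apply hg; rw [h0]; simp
      exact h ⟨by simpa using congrFun hxy0 0, by simpa using congrFun hxy0 1⟩
    have heq : Projectivization.mk ℂ (g.mulVecLin ![x, y])
          (map_zero g.mulVecLin ▸ hg.ne (by
            intro hz
            exact h ⟨by simpa using congrFun hz 0, by simpa using congrFun hz 1⟩))
        = ptP1 (g 0 0 * x + g 0 1 * y) (g 1 0 * x + g 1 1 * y) hvnz := by
      unfold ptP1
      rw [Projectivization.mk_eq_mk_iff']
      exact ⟨1, by rw [hmv]; funext i; fin_cases i <;> simp⟩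
    rw [heq] at h2
    obtain ⟨w, hw, μ, hμ, hx, hy⟩ := (mem_eightPts_iff _ _ _).1 h2
    exact ⟨w, hw, μ, hμ, hx.symm, hy.symm⟩
  -- membership of the source points
  have hsrc : ∀ w ∈ crossList, ∀ (h : ¬((w.1 : ℂ) = 0 ∧ (w.2 : ℂ) = 0)),
      ptP1 (w.1 : ℂ) (w.2 : ℂ) h ∈ eightPts := by
    intro w hw h
    exact (mem_eightPts_iff _ _ _).2 ⟨w, hw, 1, one_ne_zero, (one_mul _).symm, (one_mul _).symm⟩
  have hnz : ∀ w ∈ crossList, ¬((w.1 : ℂ) = 0 ∧ (w.2 : ℂ) = 0) := by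
    intro w hw hc
    have h1 : w.1 ≠ 0 := by fin_cases hw <;> decide
    exact (Int.cast_ne_zero.2 h1 : (w.1 : ℂ) ≠ 0) hc.1
  -- the three special points
  have m0 : ptP1 1 0 (by norm_num) ∈ eightPts := by
    have := hsrc (1,0) (by decide) (by norm_num)
    simpa using this
  have m1 : ptP1 1 1 (by norm_num) ∈ eightPts := by
    have := hsrc (1,1) (by decide) (by norm_num)
    simpa using this
  have m2 : ptP1 1 (-1) (by norm_num) ∈ eightPts := by
    have := hsrc (1,-1) (by decide) (by norm_num)
    simpa using this
  obtain ⟨w0, hw0, μ0, hμ0, h00, h01⟩ := himg 1 0 (by norm_num) m0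
  obtain ⟨w1, hw1, μ1, hμ1, h10, h11⟩ := himg 1 1 (by norm_num) m1
  obtain ⟨w2, hw2, μ2, hμ2, h20, h21⟩ := himg 1 (-1) (by norm_num) m2
  rw [mul_one, mul_zero, add_zero] at h00
  rw [mul_one, mul_zero, add_zero] at h01
  rw [mul_one] at h10 h11
  have h20' : μ2 * (w2.1 : ℂ) = g 0 0 - g 0 1 := by linear_combination h20
  have h21' : μ2 * (w2.2 : ℂ) = g 1 0 - g 1 1 := by linear_combination h21
  -- cross-product nonvanishing from the determinant
  have hen01 : w0.1 * w1.2 - w0.2 * w1.1 ≠ 0 := by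
    intro hz
    apply hdet
    have hzC : (w0.1 : ℂ) * w1.2 - w0.2 * w1.1 = 0 := by
      have : ((w0.1 * w1.2 - w0.2 * w1.1 : ℤ) : ℂ) = 0 := by rw [hz]; simp
      push_cast at this; exact this
    linear_combination μ0 * μ1 * hzC - μ1 * (w1.2 : ℂ) * h00 - g 0 0 * h11
      + μ1 * (w1.1 : ℂ) * h01 + g 1 0 * h10
  have hen02 : w0.1 * w2.2 - w0.2 * w2.1 ≠ 0 := by
    intro hz
    apply hdet
    have hzC : (w0.1 : ℂ) * w2.2 - w0.2 * w2.1 = 0 := by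
      have : ((w0.1 * w2.2 - w0.2 * w2.1 : ℤ) : ℂ) = 0 := by rw [hz]; simp
      push_cast at this; exact this
    linear_combination -(μ0 * μ2) * hzC + μ2 * (w2.2 : ℂ) * h00 + g 0 0 * h21'
      - μ2 * (w2.1 : ℂ) * h01 - g 1 0 * h20'
  have hen12 : w1.1 * w2.2 - w1.2 * w2.1 ≠ 0 := by
    intro hz
    apply hdet
    have hzC : (w1.1 : ℂ) * w2.2 - w1.2 * w2.1 = 0 := by
      have : ((w1.1 * w2.2 - w1.2 * w2.1 : ℤ) : ℂ) = 0 := by rw [hz]; simp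
      push_cast at this; exact this
    linear_combination (-(1/2) * (μ1 * μ2)) * hzC + (1/2) * μ2 * (w2.2 : ℂ) * h10
      + (1/2) * (g 0 0 + g 0 1) * h21' - (1/2) * μ2 * (w2.1 : ℂ) * h11
      - (1/2) * (g 1 0 + g 1 1) * h20'
  -- the key relation μ1 * E = μ0 * A
  have hKey : μ1 * ((w1.1 : ℂ) * w2.2 - w1.2 * w2.1)
      = μ0 * (2 * ((w0.1 : ℂ) * w2.2 - w0.2 * w2.1)) := by
    linear_combination (w2.2 : ℂ) * h10 - (w2.1 : ℂ) * h11 - 2 * (w2.2 : ℂ) * h00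
      + 2 * (w2.1 : ℂ) * h01 + (w2.2 : ℂ) * h20' - (w2.1 : ℂ) * h21'
  -- the integer cross conditions for all eight points
  have hall : ∀ w ∈ crossList, ∃ u ∈ crossList,
      (w0.1*(w.1-w.2)*(w1.1*w2.2 - w1.2*w2.1) + w1.1*w.2*(2*(w0.1*w2.2 - w0.2*w2.1))) * u.2
      = (w0.2*(w.1-w.2)*(w1.1*w2.2 - w1.2*w2.1) + w1.2*w.2*(2*(w0.1*w2.2 - w0.2*w2.1))) * u.1 := by
    intro w hw
    obtain ⟨u, hu, μ, hμ, eX, eY⟩ := himg (w.1 : ℂ) (w.2 : ℂ) (hnz w hw) (hsrc w hw _)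
    refine ⟨u, hu, ?_⟩
    have hP : μ0 * ((w0.1 : ℂ)*((w.1 : ℂ)-(w.2 : ℂ))*((w1.1 : ℂ)*w2.2 - (w1.2 : ℂ)*w2.1)
          + (w1.1 : ℂ)*(w.2 : ℂ)*(2*((w0.1 : ℂ)*w2.2 - (w0.2 : ℂ)*w2.1)))
        = (g 0 0 * (w.1 : ℂ) + g 0 1 * (w.2 : ℂ)) * ((w1.1 : ℂ)*w2.2 - (w1.2 : ℂ)*w2.1) := by
      linear_combination ((w1.1 : ℂ)*w2.2 - (w1.2 : ℂ)*w2.1) * ((w.1 : ℂ) - (w.2 : ℂ)) * h00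
        + (w.2 : ℂ) * ((w1.1 : ℂ)*w2.2 - (w1.2 : ℂ)*w2.1) * h10
        - (w1.1 : ℂ) * (w.2 : ℂ) * hKey
    have hQ : μ0 * ((w0.2 : ℂ)*((w.1 : ℂ)-(w.2 : ℂ))*((w1.1 : ℂ)*w2.2 - (w1.2 : ℂ)*w2.1)
          + (w1.2 : ℂ)*(w.2 : ℂ)*(2*((w0.1 : ℂ)*w2.2 - (w0.2 : ℂ)*w2.1)))
        = (g 1 0 * (w.1 : ℂ) + g 1 1 * (w.2 : ℂ)) * ((w1.1 : ℂ)*w2.2 - (w1.2 : ℂ)*w2.1) := by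
      linear_combination ((w1.1 : ℂ)*w2.2 - (w1.2 : ℂ)*w2.1) * ((w.1 : ℂ) - (w.2 : ℂ)) * h01
        + (w.2 : ℂ) * ((w1.1 : ℂ)*w2.2 - (w1.2 : ℂ)*w2.1) * h11
        - (w1.2 : ℂ) * (w.2 : ℂ) * hKey
    have hgoal : μ0 * (((w0.1 : ℂ)*((w.1 : ℂ)-(w.2 : ℂ))*((w1.1 : ℂ)*w2.2 - (w1.2 : ℂ)*w2.1)
          + (w1.1 : ℂ)*(w.2 : ℂ)*(2*((w0.1 : ℂ)*w2.2 - (w0.2 : ℂ)*w2.1))) * (u.2 : ℂ)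
        - ((w0.2 : ℂ)*((w.1 : ℂ)-(w.2 : ℂ))*((w1.1 : ℂ)*w2.2 - (w1.2 : ℂ)*w2.1)
          + (w1.2 : ℂ)*(w.2 : ℂ)*(2*((w0.1 : ℂ)*w2.2 - (w0.2 : ℂ)*w2.1))) * (u.1 : ℂ)) = 0 := by
      linear_combination (u.2 : ℂ) * hP - (u.1 : ℂ) * hQ
        - ((w1.1 : ℂ)*w2.2 - (w1.2 : ℂ)*w2.1) * (u.2 : ℂ) * eX
        + ((w1.1 : ℂ)*w2.2 - (w1.2 : ℂ)*w2.1) * (u.1 : ℂ) * eY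
    have hC := sub_eq_zero.mp ((mul_eq_zero.mp hgoal).resolve_left hμ0)
    exact_mod_cast hC
  obtain ⟨e0, e1, e2⟩ := zlem w0 hw0 w1 hw1 w2 hw2 hen01 hen02 hen12 hall
  subst e0; subst e1; subst e2
  push_cast at h00 h01 h10 h11 hKey
  -- now conclude the matrix is scalar
  have ha : g 0 0 = μ0 := by linear_combination -h00
  have hb : g 0 1 = 0 := by linear_combination -h10 + h00 - (1/2) * hKey
  have hc : g 1 0 = 0 := by linear_combination -h01
  have hd : g 1 1 = μ0 := by linear_combination -h11 + h01 - (1/2) * hKey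
  intro p
  induction p using Projectivization.ind with
  | h v hv =>
    rw [Projectivization.map_mk, Projectivization.mk_eq_mk_iff']
    refine ⟨μ0, ?_⟩
    have hgm : g = μ0 • (1 : Matrix (Fin 2) (Fin 2) ℂ) := by
      ext i j
      fin_cases i <;> fin_cases j <;> simp [ha, hb, hc, hd, Matrix.one_apply]
    have hvv : g.mulVecLin v = μ0 • v := by
      rw [hgm]
      simp [Matrix.mulVecLin_apply, Matrix.smul_mulVec, Matrix.one_mulVec]
    rw [hvv]
end

section
/- The set of points (x0:x1:x2:x3) of the complex projective space P^3(C) satisfying the three quadric equations 40*x0*x1 + 55*x1*x2 + 12*x1*x3 + 3*x2*x3 = 0, 12*x0*x2 + 7*x1*x2 + 4*x1*x3 - 9*x2*x3 = 0, and 5*x1*x2 + 8*x0*x3 + 4*x1*x3 + 9*x2*x3 = 0 is exactly the set of eight points {(1:0:0:0), (0:1:0:0), (0:0:1:0), (0:0:0:1), (-1:1:1:-1), (2:3:-2:3), (-3:3:1:5), (21:18:-20:30)}. -/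
private lemma vec4_eq (a b c d t w0 w1 w2 w3 : ℂ) (h0 : a = t*w0) (h1 : b = t*w1)
    (h2 : c = t*w2) (h3 : d = t*w3) : ![a,b,c,d] = t • ![w0,w1,w2,w3] := by
  funext i
  fin_cases i <;> simp [h0, h1, h2, h3]

private lemma vec4_ne (a b c d : ℂ) (h : ![a,b,c,d] ≠ 0) (h1 : b = 0) (h2 : c = 0)
    (h3 : d = 0) : a ≠ 0 := by
  intro h0
  apply h
  funext i
  fin_cases i <;> simp [h0, h1, h2, h3]

/-- The common zero locus in `ℙ³(ℂ)` of the three quadrics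
`40x0x1 + 55x1x2 + 12x1x3 + 3x2x3`, `12x0x2 + 7x1x2 + 4x1x3 - 9x2x3` and
`5x1x2 + 8x0x3 + 4x1x3 + 9x2x3` is exactly the set of eight points
`(1:0:0:0), (0:1:0:0), (0:0:1:0), (0:0:0:1), (-1:1:1:-1), (2:3:-2:3), (-3:3:1:5),
(21:18:-20:30)`. -/
theorem three_quadrics_fixed_points (v : Fin 4 → ℂ) (hv : v ≠ 0) :
    (40*v 0*v 1 + 55*v 1*v 2 + 12*v 1*v 3 + 3*v 2*v 3 = 0 ∧
     12*v 0*v 2 + 7*v 1*v 2 + 4*v 1*v 3 - 9*v 2*v 3 = 0 ∧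
     5*v 1*v 2 + 8*v 0*v 3 + 4*v 1*v 3 + 9*v 2*v 3 = 0) ↔
    ∃ t : ℂ, t ≠ 0 ∧
      (v = t • ![1, 0, 0, 0] ∨ v = t • ![0, 1, 0, 0] ∨ v = t • ![0, 0, 1, 0] ∨
       v = t • ![0, 0, 0, 1] ∨ v = t • ![-1, 1, 1, -1] ∨ v = t • ![2, 3, -2, 3] ∨
       v = t • ![-3, 3, 1, 5] ∨ v = t • ![21, 18, -20, 30]) := by
  obtain ⟨a, b, c, d, rfl⟩ : ∃ a b c d, v = ![a,b,c,d] :=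
    ⟨v 0, v 1, v 2, v 3, by funext i; fin_cases i <;> rfl⟩
  simp only [Matrix.cons_val_zero, Matrix.cons_val_one, Matrix.head_cons,
    Matrix.cons_val_two, Matrix.tail_cons, Matrix.cons_val_three]
  constructor
  · rintro ⟨e1, e2, e3⟩
    by_cases hd : d = 0
    · subst hd
      have hbc : b * c = 0 := by linear_combination e3 / 5
      rcases mul_eq_zero.mp hbc with hb | hc
      · subst hb
        have hac : a * c = 0 := by linear_combination e2 / 12
        rcases mul_eq_zero.mp hac with ha | hc
        · subst ha
          have hc : c ≠ 0 := by
            intro h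
            apply hv
            funext i
            fin_cases i <;> simp [h]
          exact ⟨c, hc, Or.inr (Or.inr (Or.inl (vec4_eq _ _ _ _ _ _ _ _ _
            (by ring) (by ring) (by ring) (by ring))))⟩
        · subst hc
          have ha := vec4_ne a 0 0 0 hv rfl rfl rfl
          exact ⟨a, ha, Or.inl (vec4_eq _ _ _ _ _ _ _ _ _
            (by ring) (by ring) (by ring) (by ring))⟩
      · subst hc
        have hab : a * b = 0 := by linear_combination e1 / 40
        rcases mul_eq_zero.mp hab with ha | hb
        · subst ha
          have hb : b ≠ 0 := by
            intro h
            apply hv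
            funext i
            fin_cases i <;> simp [h]
          exact ⟨b, hb, Or.inr (Or.inl (vec4_eq _ _ _ _ _ _ _ _ _
            (by ring) (by ring) (by ring) (by ring)))⟩
        · subst hb
          have ha := vec4_ne a 0 0 0 hv rfl rfl rfl
          exact ⟨a, ha, Or.inl (vec4_eq _ _ _ _ _ _ _ _ _
            (by ring) (by ring) (by ring) (by ring))⟩
    · by_cases hc : c = 0
      · subst hc
        have hb : b = 0 := by
          have h4 : b * d = 0 := by linear_combination e2 / 4
          rcases mul_eq_zero.mp h4 with h | h
          · exact h
          · exact absurd h hd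
        subst hb
        have ha : a = 0 := by
          have h8 : a * d = 0 := by linear_combination e3 / 8
          rcases mul_eq_zero.mp h8 with h | h
          · exact h
          · exact absurd h hd
        subst ha
        exact ⟨d, hd, Or.inr (Or.inr (Or.inr (Or.inl (vec4_eq _ _ _ _ _ _ _ _ _
          (by ring) (by ring) (by ring) (by ring)))))⟩
      · by_cases hb : b = 0
        · subst hb
          exfalso
          have h3 : c * d = 0 := by linear_combination e1 / 3
          rcases mul_eq_zero.mp h3 with h | h
          · exact hc h
          · exact hd h
        · -- main case: b, c, d all nonzero
          have key : ((c-b)*(3*c+2*b)*(3*c-b)*(9*c+10*b)) * (800*b^2*c) = 0 := by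
            linear_combination
              ((9*c^2+126*b*c-40*b^2)^2*d
                - 3*c*((10*b*c-20*b^2)*(9*c^2+126*b*c-40*b^2)
                  + (12*b+3*c)*(d*(9*c^2+126*b*c-40*b^2)+(70*b^2*c-165*b*c^2)))) * e1
              + (10*b*((10*b*c-20*b^2)*(9*c^2+126*b*c-40*b^2)
                  + (12*b+3*c)*(d*(9*c^2+126*b*c-40*b^2)+(70*b^2*c-165*b*c^2)))) * e2
              + (-5*b*(9*c^2+126*b*c-40*b^2)^2) * e3
          have h800 : (800:ℂ)*b^2*c ≠ 0 := by
            intro h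
            rcases mul_eq_zero.mp h with h | h
            · rcases mul_eq_zero.mp h with h | h
              · norm_num at h
              · exact hb (pow_eq_zero_iff (by norm_num)|>.mp h)
            · exact hc h
          have hfac : (c-b)*(3*c+2*b)*(3*c-b)*(9*c+10*b) = 0 :=
            (mul_eq_zero.mp key).resolve_right h800
          have hb2 : (95:ℂ)*b^2 ≠ 0 := by
            intro h
            rcases mul_eq_zero.mp h with h | h
            · norm_num at h
            · exact hb (pow_eq_zero_iff (by norm_num)|>.mp h)
          have hb40 : (40:ℂ)*b ≠ 0 := by
            intro h
            rcases mul_eq_zero.mp h with h | h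
            · norm_num at h
            · exact hb h
          rcases mul_eq_zero.mp hfac with h123 | h4
          · rcases mul_eq_zero.mp h123 with h12 | h3
            · rcases mul_eq_zero.mp h12 with h1 | h2
              · -- c = b
                have hcb : c = b := by linear_combination h1
                rw [hcb] at e1 e2
                have hdb : d = -b := by
                  have h9 : (95*b^2) * (d + b) = 0 := by
                    linear_combination 3*b*e1 - 10*b*e2
                  have := (mul_eq_zero.mp h9).resolve_left hb2
                  linear_combination this
                rw [hdb] at e1
                have hab : a = -b := by
                  have h4 : (40*b) * (a + b) = 0 := by linear_combination e1
                  have := (mul_eq_zero.mp h4).resolve_left hb40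
                  linear_combination this
                exact ⟨b, hb, Or.inr (Or.inr (Or.inr (Or.inr (Or.inl
                  (vec4_eq _ _ _ _ _ _ _ _ _ (by linear_combination hab)
                    (by ring) (by linear_combination hcb) (by linear_combination hdb))))))⟩
              · -- 3c + 2b = 0
                have hcb : c = -(2/3)*b := by linear_combination h2 / 3
                rw [hcb] at e1 e2
                have hdb : d = b := by
                  have h9 : (95*b^2) * ((24/19)*(b - d)) = 0 := by
                    linear_combination (-2*b)*e1 - 10*b*e2
                  have := (mul_eq_zero.mp h9).resolve_left hb2
                  linear_combination (-19/24)*this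
                rw [hdb] at e1
                have hab : a = (2/3)*b := by
                  have h4 : (40*b) * (a - (2/3)*b) = 0 := by linear_combination e1
                  have := (mul_eq_zero.mp h4).resolve_left hb40
                  linear_combination this
                refine ⟨b/3, by simpa using hb, Or.inr (Or.inr (Or.inr (Or.inr (Or.inr (Or.inl
                  (vec4_eq _ _ _ _ _ _ _ _ _ (by linear_combination hab)
                    (by ring) (by linear_combination hcb) (by linear_combination hdb)))))))⟩
            · -- 3c - b = 0
              have hcb : c = (1/3)*b := by linear_combination h3 / 3
              rw [hcb] at e1 e2
              have hdb : d = (5/3)*b := by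
                have h9 : (95*b^2) * ((3/95)*(d - (5/3)*b)) = 0 := by
                  linear_combination b*e1 - 10*b*e2
                have := (mul_eq_zero.mp h9).resolve_left hb2
                linear_combination (95/3)*this
              rw [hdb] at e1
              have hab : a = -b := by
                have h4 : (40*b) * (a + b) = 0 := by linear_combination e1
                have := (mul_eq_zero.mp h4).resolve_left hb40
                linear_combination this
              refine ⟨b/3, by simpa using hb, Or.inr (Or.inr (Or.inr (Or.inr (Or.inr (Or.inr (Or.inl
                (vec4_eq _ _ _ _ _ _ _ _ _ (by linear_combination hab)
                  (by ring) (by linear_combination hcb) (by linear_combination hdb))))))))⟩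
          · -- 9c + 10b = 0
            have hcb : c = -(10/9)*b := by linear_combination h4 / 9
            rw [hcb] at e1 e2
            have hdb : d = (5/3)*b := by
              have h9 : (95*b^2) * ((16/9)*((5/3)*b - d)) = 0 := by
                linear_combination (-(10/3)*b)*e1 - 10*b*e2
              have := (mul_eq_zero.mp h9).resolve_left hb2
              linear_combination (-9/16)*this
            rw [hdb] at e1
            have hab : a = (7/6)*b := by
              have h4 : (40*b) * (a - (7/6)*b) = 0 := by linear_combination e1
              have := (mul_eq_zero.mp h4).resolve_left hb40
              linear_combination this
            refine ⟨b/18, by simpa using hb, Or.inr (Or.inr (Or.inr (Or.inr (Or.inr (Or.inr (Or.inr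
              (vec4_eq _ _ _ _ _ _ _ _ _ (by linear_combination hab)
                (by ring) (by linear_combination hcb) (by linear_combination hdb))))))))⟩
  · rintro ⟨t, ht, h | h | h | h | h | h | h | h⟩ <;>
      · have h0 := congrFun h 0
        have h1 := congrFun h 1
        have h2 := congrFun h 2
        have h3 := congrFun h 3
        simp only [Pi.smul_apply, Matrix.cons_val_zero, Matrix.cons_val_one,
          Matrix.head_cons, Matrix.cons_val_two, Matrix.tail_cons, Matrix.cons_val_three,
          smul_eq_mul] at h0 h1 h2 h3
        subst h0 h1 h2 h3
        refine ⟨by ring, by ring, by ring⟩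
end

section
/- The set of points (x0:x1:x2) of the complex projective plane P^2(C) satisfying both x0*x1 - x2^2 = 0 and 2*x0^3*x1 - 4*x0*x1^3 + 30*x1^4 - 42*x0^3*x2 + 5*x0^2*x1*x2 - 2*x0*x1^2*x2 + 79*x1^3*x2 + 363*x0^2*x2^2 + x0*x1*x2^2 - 803*x1^2*x2^2 - 890*x0*x2^3 + 850*x1*x2^3 + 411*x2^4 = 0 is exactly the set of eight points {(1:0:0), (1:1:1), (1:1:-1), (4:1:2), (1:9:3), (9:4:6), (25:1:5), (1:49:-7)}. -/
/-- The intersection in `ℙ²(ℂ)` of the conic `x0x1 - x2² = 0` with the quartic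
`2x0³x1 - 4x0x1³ + 30x1⁴ - 42x0³x2 + 5x0²x1x2 - 2x0x1²x2 + 79x1³x2 + 363x0²x2²
+ x0x1x2² - 803x1²x2² - 890x0x2³ + 850x1x2³ + 411x2⁴ = 0` is exactly the set of
eight points `(1:0:0), (1:1:1), (1:1:-1), (4:1:2), (1:9:3), (9:4:6), (25:1:5),
(1:49:-7)`. -/
theorem conic_meet_quartic (v : Fin 3 → ℂ) (hv : v ≠ 0) :
    (v 0 * v 1 - (v 2)^2 = 0 ∧
     2*(v 0)^3*v 1 - 4*v 0*(v 1)^3 + 30*(v 1)^4 - 42*(v 0)^3*v 2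
       + 5*(v 0)^2*v 1*v 2 - 2*v 0*(v 1)^2*v 2 + 79*(v 1)^3*v 2
       + 363*(v 0)^2*(v 2)^2 + v 0*v 1*(v 2)^2 - 803*(v 1)^2*(v 2)^2
       - 890*v 0*(v 2)^3 + 850*v 1*(v 2)^3 + 411*(v 2)^4 = 0) ↔
    ∃ t : ℂ, t ≠ 0 ∧
      (v = t • ![1, 0, 0] ∨ v = t • ![1, 1, 1] ∨ v = t • ![1, 1, -1] ∨
       v = t • ![4, 1, 2] ∨ v = t • ![1, 9, 3] ∨ v = t • ![9, 4, 6] ∨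
       v = t • ![25, 1, 5] ∨ v = t • ![1, 49, -7]) := by
  set a := v 0 with ha
  set b := v 1 with hb
  set c := v 2 with hc
  constructor
  · rintro ⟨h1, h2⟩
    -- first: a ≠ 0
    have hane : a ≠ 0 := by
      intro h0
      have hc0 : c = 0 := by
        have : c ^ 2 = 0 := by linear_combination -h1 + b * h0
        exact pow_eq_zero_iff (n := 2) (by norm_num) |>.mp this
      have hb0 : b = 0 := by
        have h4 : b ^ 4 = 0 := by
          linear_combination (h2 - (2*a^2*b - 4*b^3 - 42*a^2*c + 5*a*b*c + 363*a*c^2 - 890*c^3) * h0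
            - ((-2)*a*b^2 + 79*b^3 + a*b*c - 803*b^2*c + 850*b*c^2 + 411*c^3) * hc0) / 30
        exact pow_eq_zero_iff (n := 4) (by norm_num) |>.mp h4
      apply hv
      funext i
      fin_cases i
      · exact h0
      · exact hb0
      · exact hc0
    have hG : c * (c - a) * (c + a) * (2*c - a) * (c - 3*a) * (3*c - 2*a) * (5*c - a) * (c + 7*a) = 0 := by
      linear_combination a^4 * h2 - (30*c^6 + 79*a*c^5 + 30*a*b*c^4 - 807*a^2*c^4
        + 79*a^2*b*c^3 + 30*a^2*b^2*c^2 + 848*a^3*c^3 - 807*a^3*b*c^2 + 79*a^3*b^2*c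
        + 30*a^3*b^3 + a^4*c^2 - 2*a^4*b*c - 4*a^4*b^2 + 5*a^5*c + 2*a^6) * h1
    -- helper to build the witness
    have key : ∀ (t p q r : ℂ), a = t * p → b = t * q → c = t * r →
        v = t • ![p, q, r] := by
      intro t p q r hh0 hh1 hh2
      funext i
      fin_cases i
      · simpa using hh0
      · simpa using hh1
      · simpa using hh2
    have cancel : ∀ x y : ℂ, a * x = a * y → x = y := fun x y h =>
      mul_left_cancel₀ hane h
    rcases mul_eq_zero.mp hG with hG | h8
    rcases mul_eq_zero.mp hG with hG | h7
    rcases mul_eq_zero.mp hG with hG | h6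
    rcases mul_eq_zero.mp hG with hG | h5
    rcases mul_eq_zero.mp hG with hG | h4
    rcases mul_eq_zero.mp hG with hG | h3
    rcases mul_eq_zero.mp hG with h1' | h2'
    -- c = 0 : point (1,0,0)
    · have hb0 : b = 0 := cancel b 0 (by linear_combination h1 + c * h1')
      exact ⟨a, hane, Or.inl (key a 1 0 0 (by ring) (by simpa using hb0) (by simpa using h1'))⟩
    -- c = a : point (1,1,1)
    · have hbb : b = a := cancel b a (by linear_combination h1 + (c + a) * h2')
      exact ⟨a, hane, Or.inr <| Or.inl
        (key a 1 1 1 (by ring) (by linear_combination hbb) (by linear_combination h2'))⟩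
    -- c = -a : point (1,1,-1)
    · have hbb : b = a := cancel b a (by linear_combination h1 + (c - a) * h3)
      exact ⟨a, hane, Or.inr <| Or.inr <| Or.inl
        (key a 1 1 (-1) (by ring) (by linear_combination hbb) (by linear_combination h3))⟩
    -- a = 2c : point (4,1,2)
    · have hcne : c ≠ 0 := fun h0 => hane (by linear_combination -h4 + 2 * h0)
      have hbb : b = c / 2 := by
        have h0 : c * (2 * b - c) = 0 := by linear_combination h1 + b * h4
        rcases mul_eq_zero.mp h0 with h0 | h0
        · exact absurd h0 hcne
        · field_simp
          linear_combination h0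
      refine ⟨c / 2, fun h0 => hcne (by field_simp at h0; linear_combination h0),
        Or.inr <| Or.inr <| Or.inr <| Or.inl
        (key (c/2) 4 1 2 (by field_simp; linear_combination -2 * h4)
          (by linear_combination hbb) (by ring))⟩
    -- c = 3a : point (1,9,3)
    · have hbb : b = 9 * a := cancel b (9*a) (by linear_combination h1 + (c + 3*a) * h5)
      exact ⟨a, hane, Or.inr <| Or.inr <| Or.inr <| Or.inr <| Or.inl
        (key a 1 9 3 (by ring) (by linear_combination hbb) (by linear_combination h5))⟩
    -- 3c = 2a : point (9,4,6)
    · have hcne : c ≠ 0 := fun h0 => hane (by linear_combination (3 * h0 - h6) / 2)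
      have hbb : b = 2 * c / 3 := by
        have h0 : c * (3 * b - 2 * c) = 0 := by linear_combination 2 * h1 + b * h6
        rcases mul_eq_zero.mp h0 with h0 | h0
        · exact absurd h0 hcne
        · field_simp
          linear_combination h0
      refine ⟨c / 6, fun h0 => hcne (by field_simp at h0; linear_combination h0),
        Or.inr <| Or.inr <| Or.inr <| Or.inr <| Or.inr <| Or.inl
        (key (c/6) 9 4 6 (by field_simp; linear_combination -3 * h6)
          (by field_simp; linear_combination 6 * hbb) (by ring))⟩
    -- a = 5c : point (25,1,5)
    · have hcne : c ≠ 0 := fun h0 => hane (by linear_combination -h7 + 5 * h0)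
      have hbb : b = c / 5 := by
        have h0 : c * (5 * b - c) = 0 := by linear_combination h1 + b * h7
        rcases mul_eq_zero.mp h0 with h0 | h0
        · exact absurd h0 hcne
        · field_simp
          linear_combination h0
      refine ⟨c / 5, fun h0 => hcne (by field_simp at h0; linear_combination h0),
        Or.inr <| Or.inr <| Or.inr <| Or.inr <| Or.inr <| Or.inr <| Or.inl
        (key (c/5) 25 1 5 (by field_simp; linear_combination -5 * h7)
          (by linear_combination hbb) (by ring))⟩
    -- c = -7a : point (1,49,-7)
    · have hbb : b = 49 * a := cancel b (49*a) (by linear_combination h1 + (c - 7*a) * h8)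
      exact ⟨a, hane, Or.inr <| Or.inr <| Or.inr <| Or.inr <| Or.inr <| Or.inr <| Or.inr
        (key a 1 49 (-7) (by ring) (by linear_combination hbb) (by linear_combination h8))⟩
  · rintro ⟨t, ht, h | h | h | h | h | h | h | h⟩ <;>
      constructor <;>
      (rw [ha, hb, hc, h]; simp [Matrix.smul_cons]; try ring)
end

section
/- Let alpha be a nonzero complex number. Let R = C[x,y]/(y^2 - alpha*x^4) and let sigma be the C-algebra automorphism of R induced by x -> -x, y -> -y (which is well defined since y^2 - alpha*x^4 is invariant under this substitution). Then the fixed subalgebra R^sigma = {r in R : sigma(r) = r} is isomorphic as a C-algebra to C[u,w]/(w^2 - alpha*u^3), via the map sending u to the class of x^2 and w to the class of x*y. -/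
open MvPolynomial

/-- The ring `ℂ[x,y]/(y² - α·x⁴)` (variable `0` is `x`, variable `1` is `y`). -/
abbrev quotRing (α : ℂ) : Type :=
  MvPolynomial (Fin 2) ℂ ⧸
    (Ideal.span {(X 1)^2 - C α * (X 0)^4} : Ideal (MvPolynomial (Fin 2) ℂ))

/-- The ring `ℂ[u,w]/(w² - α·u³)` (variable `0` is `u`, variable `1` is `w`). -/
abbrev cuspRing (α : ℂ) : Type :=
  MvPolynomial (Fin 2) ℂ ⧸
    (Ideal.span {(X 1)^2 - C α * (X 0)^3} : Ideal (MvPolynomial (Fin 2) ℂ))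

noncomputable section
namespace CuspAux

/-- substitution `x ↦ -x, y ↦ -y` on `ℂ[x,y]`. -/
def τ : MvPolynomial (Fin 2) ℂ →ₐ[ℂ] MvPolynomial (Fin 2) ℂ :=
  aeval ![-X 0, -X 1]

lemma τ_monomial (m : Fin 2 →₀ ℕ) (c : ℂ) :
    τ (monomial m c) = monomial m ((-1)^(m 0 + m 1) * c) := by
  rw [τ, aeval_monomial, Finsupp.prod_fintype _ _ (fun i => pow_zero _),
    monomial_eq, Finsupp.prod_fintype _ _ (fun i => pow_zero _),
    Fin.prod_univ_two, Fin.prod_univ_two]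
  rw [show ((![-X 0, -X 1] : Fin 2 → MvPolynomial (Fin 2) ℂ) 0) = -X 0 from rfl,
    show ((![-X 0, -X 1] : Fin 2 → MvPolynomial (Fin 2) ℂ) 1) = -X 1 from rfl,
    neg_pow (X 0 : MvPolynomial (Fin 2) ℂ), neg_pow (X 1 : MvPolynomial (Fin 2) ℂ), algebraMap_eq, C_mul, C_pow, C_neg, C_1, pow_add]
  ring

lemma τ_coeff (h : MvPolynomial (Fin 2) ℂ) (m : Fin 2 →₀ ℕ) :
    coeff m (τ h) = (-1)^(m 0 + m 1) * coeff m h := by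
  conv_lhs => rw [← h.support_sum_monomial_coeff]
  rw [map_sum]
  simp_rw [τ_monomial]
  rw [coeff_sum]
  simp only [coeff_monomial]
  rw [Finset.sum_ite_eq' h.support m]
  split_ifs with hm
  · rfl
  · rw [notMem_support_iff.mp hm, mul_zero]

lemma τ_τ (q : MvPolynomial (Fin 2) ℂ) : τ (τ q) = q := by
  have : τ.comp τ = AlgHom.id ℂ (MvPolynomial (Fin 2) ℂ) := by
    apply MvPolynomial.algHom_ext
    intro i
    fin_cases i <;> simp [τ]
  exact DFunLike.congr_fun this q

lemma even_mem (h : MvPolynomial (Fin 2) ℂ) (hh : τ h = h) :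
    h ∈ Algebra.adjoin ℂ ({X 0 ^ 2, X 0 * X 1, X 1 ^ 2} : Set (MvPolynomial (Fin 2) ℂ)) := by
  set S := Algebra.adjoin ℂ ({X 0 ^ 2, X 0 * X 1, X 1 ^ 2} : Set (MvPolynomial (Fin 2) ℂ))
  have hodd : ∀ m : Fin 2 →₀ ℕ, ¬ 2 ∣ (m 0 + m 1) → coeff m h = 0 := by
    intro m hm
    have h1 := τ_coeff h m
    rw [hh, Odd.neg_one_pow (Nat.odd_iff.mpr (by omega))] at h1
    linear_combination (1/2 : ℂ) * h1
  rw [← h.support_sum_monomial_coeff]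
  refine Subalgebra.sum_mem _ fun m hm => ?_
  have h2 : 2 ∣ (m 0 + m 1) := by
    by_contra hc
    exact (mem_support_iff.mp hm) (hodd m hc)
  have hX0 : (X 0 : MvPolynomial (Fin 2) ℂ)^2 ∈ S := Algebra.subset_adjoin (by simp)
  have hXY : (X 0 : MvPolynomial (Fin 2) ℂ) * X 1 ∈ S := Algebra.subset_adjoin (by simp)
  have hX1 : (X 1 : MvPolynomial (Fin 2) ℂ)^2 ∈ S := Algebra.subset_adjoin (by simp)
  have hC : ∀ c : ℂ, (C c : MvPolynomial (Fin 2) ℂ) ∈ S := fun c => by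
    rw [← algebraMap_eq]; exact Subalgebra.algebraMap_mem _ c
  rw [monomial_eq, Finsupp.prod_fintype _ _ (fun i => pow_zero _), Fin.prod_univ_two]
  rcases Nat.even_or_odd (m 0) with he | ho
  · obtain ⟨a, ha⟩ : ∃ a, m 0 = 2 * a := ⟨(m 0)/2, by rcases he with ⟨t, ht⟩; omega⟩
    obtain ⟨b, hb⟩ : ∃ b, m 1 = 2 * b := ⟨(m 1)/2, by omega⟩
    rw [ha, hb, pow_mul, pow_mul]
    exact Subalgebra.mul_mem _ (hC _)
      (Subalgebra.mul_mem _ (Subalgebra.pow_mem _ hX0 a) (Subalgebra.pow_mem _ hX1 b))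
  · obtain ⟨a, ha⟩ : ∃ a, m 0 = 2 * a + 1 := ⟨(m 0)/2, by rcases ho with ⟨t, ht⟩; omega⟩
    obtain ⟨b, hb⟩ : ∃ b, m 1 = 2 * b + 1 := ⟨(m 1)/2, by omega⟩
    have key : (X 0 : MvPolynomial (Fin 2) ℂ) ^ m 0 * X 1 ^ m 1
        = (X 0 * X 1) * (((X 0)^2)^a * ((X 1)^2)^b) := by
      rw [ha, hb]; ring
    rw [key]
    exact Subalgebra.mul_mem _ (hC _) (Subalgebra.mul_mem _ hXY
      (Subalgebra.mul_mem _ (Subalgebra.pow_mem _ hX0 a) (Subalgebra.pow_mem _ hX1 b)))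

lemma cusp_reduce (α : ℂ) (p : MvPolynomial (Fin 2) ℂ) :
    ∃ a b : Polynomial ℂ,
      p - (Polynomial.aeval (X 0) a + Polynomial.aeval (X 0) b * X 1)
        ∈ Ideal.span {(X 1)^2 - C α * (X 0)^3} := by
  induction p using MvPolynomial.induction_on with
  | C c =>
      refine ⟨Polynomial.C c, 0, ?_⟩
      simp [algebraMap_eq]
  | add p q hp hq =>
      obtain ⟨a, b, hp⟩ := hp
      obtain ⟨a', b', hq⟩ := hq
      refine ⟨a + a', b + b', ?_⟩
      have h := Ideal.add_mem _ hp hq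
      convert h using 1
      simp only [map_add]
      ring
  | mul_X p i hp =>
      obtain ⟨a, b, hp⟩ := hp
      fin_cases i
      · refine ⟨a * Polynomial.X, b * Polynomial.X, ?_⟩
        have h := Ideal.mul_mem_right (X 0) _ hp
        convert h using 1
        simp only [map_mul, Polynomial.aeval_X, Fin.zero_eta]
        ring
      · refine ⟨Polynomial.C α * Polynomial.X^3 * b, a, ?_⟩
        have hg : ((X 1)^2 - C α * (X 0)^3 : MvPolynomial (Fin 2) ℂ)
            ∈ Ideal.span {(X 1)^2 - C α * (X 0)^3} :=
          Ideal.subset_span (Set.mem_singleton _)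
        have h := Ideal.add_mem _ (Ideal.mul_mem_right (X 1) _ hp)
          (Ideal.mul_mem_left _ (Polynomial.aeval (X 0) b) hg)
        convert h using 1
        simp only [map_mul, map_pow, Polynomial.aeval_X, Polynomial.aeval_C, algebraMap_eq,
          Fin.mk_one]
        ring

lemma expand_odd_zero (β : ℂ) (hβ : β ≠ 0) (a b : Polynomial ℂ)
    (h : Polynomial.expand ℂ 2 a
      + Polynomial.expand ℂ 2 b * (Polynomial.C β * Polynomial.X^3) = 0) :
    a = 0 ∧ b = 0 := by
  have hc : ∀ n : ℕ, (Polynomial.expand ℂ 2 a).coeff n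
      + β * ((Polynomial.expand ℂ 2 b) * Polynomial.X^3).coeff n = 0 := by
    intro n
    have h' : Polynomial.expand ℂ 2 a
        + Polynomial.C β * ((Polynomial.expand ℂ 2 b) * Polynomial.X^3) = 0 := by
      linear_combination h
    have := congrArg (fun q : Polynomial ℂ => q.coeff n) h'
    simpa [Polynomial.coeff_add, Polynomial.coeff_C_mul] using this
  constructor
  · ext k
    have h0 := hc (2*k)
    rw [Polynomial.coeff_expand (by norm_num), Polynomial.coeff_mul_X_pow'] at h0
    rw [if_pos (dvd_mul_right 2 k), show (2*k)/2 = k by omega] at h0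
    by_cases h3 : 3 ≤ 2*k
    · rw [if_pos h3, Polynomial.coeff_expand (by norm_num), if_neg (by omega)] at h0
      simpa using h0
    · rw [if_neg h3] at h0
      simpa using h0
  · ext k
    have h0 := hc (2*k+3)
    rw [Polynomial.coeff_expand (by norm_num), Polynomial.coeff_mul_X_pow'] at h0
    rw [if_neg (by omega : ¬ 2 ∣ 2*k+3), if_pos (by omega : 3 ≤ 2*k+3),
      Polynomial.coeff_expand (by norm_num), if_pos (by omega : 2 ∣ 2*k+3-3),
      show (2*k+3-3)/2 = k by omega] at h0
    have hb0 : β * b.coeff k = 0 := by linear_combination h0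
    simpa using (mul_eq_zero.mp hb0).resolve_left hβ

lemma cusp_ker (α β : ℂ) (hβ2 : β^2 = α) (hβ : β ≠ 0) (p : MvPolynomial (Fin 2) ℂ)
    (h : aeval ![(Polynomial.X : Polynomial ℂ)^2, Polynomial.C β * Polynomial.X^3] p = 0) :
    p ∈ Ideal.span {(X 1)^2 - C α * (X 0)^3} := by
  obtain ⟨a, b, hab⟩ := cusp_reduce α p
  set v : Fin 2 → Polynomial ℂ := ![Polynomial.X^2, Polynomial.C β * Polynomial.X^3] with hv
  have hcomp : (aeval v).comp (Polynomial.aeval (X 0 : MvPolynomial (Fin 2) ℂ))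
      = (Polynomial.expand ℂ 2) := by
    apply Polynomial.algHom_ext
    simp [hv, Polynomial.expand_X]
  have hg0 : aeval v ((X 1)^2 - C α * (X 0)^3 : MvPolynomial (Fin 2) ℂ) = 0 := by
    simp only [map_sub, map_pow, map_mul, aeval_X, aeval_C]
    show (v 1)^2 - algebraMap ℂ (Polynomial ℂ) α * (v 0)^3 = 0
    rw [hv]
    simp only [Matrix.cons_val_one, Matrix.head_cons, Matrix.cons_val_zero,
      Polynomial.algebraMap_eq]
    rw [← hβ2, map_pow]; ring
  have hs0 : aeval v (p - (Polynomial.aeval (X 0) a + Polynomial.aeval (X 0) b * X 1)) = 0 := by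
    obtain ⟨c, hcq⟩ := Ideal.mem_span_singleton.mp hab
    rw [hcq, map_mul, hg0, zero_mul]
  have hA := DFunLike.congr_fun hcomp a
  have hB := DFunLike.congr_fun hcomp b
  simp only [AlgHom.coe_comp, Function.comp_apply] at hA hB
  rw [map_sub, h, map_add, map_mul, hA, hB, zero_sub, neg_eq_zero] at hs0
  have hv1 : aeval v (X 1 : MvPolynomial (Fin 2) ℂ) = Polynomial.C β * Polynomial.X^3 := by
    rw [aeval_X, hv]
    simp
  rw [hv1] at hs0
  obtain ⟨ha0, hb0⟩ := expand_odd_zero β hβ a b hs0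
  rw [ha0, hb0] at hab
  simpa using hab

end CuspAux
end

/-- Let `α ≠ 0`, `R = ℂ[x,y]/(y² - αx⁴)`, and let `σ` be the `ℂ`-algebra
automorphism of `R` induced by `x ↦ -x`, `y ↦ -y`. Then the fixed subalgebra
`R^σ` is isomorphic as a `ℂ`-algebra to `ℂ[u,w]/(w² - αu³)` via `u ↦ x²`,
`w ↦ xy`: there is an injective `ℂ`-algebra homomorphism
`ℂ[u,w]/(w² - αu³) → R` with image `R^σ` sending `u` to `x²` and `w` to `xy`. -/
theorem fixed_subalgebra_of_involution_is_cuspidal_cubic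
    (α : ℂ) (hα : α ≠ 0) (σ : quotRing α ≃ₐ[ℂ] quotRing α)
    (hx : σ (Ideal.Quotient.mk _ (X 0)) = -(Ideal.Quotient.mk _ (X 0)))
    (hy : σ (Ideal.Quotient.mk _ (X 1)) = -(Ideal.Quotient.mk _ (X 1))) :
    ∃ e : cuspRing α →ₐ[ℂ] quotRing α,
      Function.Injective e ∧
      e.range = AlgHom.equalizer (σ : quotRing α →ₐ[ℂ] quotRing α) (AlgHom.id ℂ (quotRing α)) ∧
      e (Ideal.Quotient.mk _ (X 0)) = Ideal.Quotient.mk _ ((X 0)^2) ∧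
      e (Ideal.Quotient.mk _ (X 1)) = Ideal.Quotient.mk _ (X 0 * X 1) := by
  classical
  obtain ⟨β, hβ2⟩ := IsAlgClosed.exists_pow_nat_eq α (n := 2) (by norm_num)
  have hβ : β ≠ 0 := by
    rintro rfl
    exact hα (by rw [← hβ2]; ring)
  let mkI : MvPolynomial (Fin 2) ℂ →ₐ[ℂ] quotRing α :=
    Ideal.Quotient.mkₐ ℂ (Ideal.span {(X 1)^2 - C α * (X 0)^4})
  let mkJ : MvPolynomial (Fin 2) ℂ →ₐ[ℂ] cuspRing α :=
    Ideal.Quotient.mkₐ ℂ (Ideal.span {(X 1)^2 - C α * (X 0)^3})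
  have hmkI : ∀ q, mkI q = Ideal.Quotient.mk _ q := fun q => rfl
  have hmkJ : ∀ q, mkJ q = Ideal.Quotient.mk _ q := fun q => rfl
  have hCα : (algebraMap ℂ (quotRing α)) α = mkI (C α) :=
    (mkI.commutes α).symm
  let F : MvPolynomial (Fin 2) ℂ →ₐ[ℂ] quotRing α := aeval ![mkI ((X 0)^2), mkI (X 0 * X 1)]
  have hFX0 : F (X 0) = mkI ((X 0)^2) := by
    show (aeval ![mkI ((X 0)^2), mkI (X 0 * X 1)]) (X 0) = mkI ((X 0)^2)
    simp
  have hFX1 : F (X 1) = mkI (X 0 * X 1) := by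
    show (aeval ![mkI ((X 0)^2), mkI (X 0 * X 1)]) (X 1) = mkI (X 0 * X 1)
    simp
  have hF0 : ∀ q ∈ Ideal.span {(X 1)^2 - C α * (X 0)^3}, F q = 0 := by
    have hFg : F ((X 1)^2 - C α * (X 0)^3) = 0 := by
      have h1 : F ((X 1)^2 - C α * (X 0)^3) = mkI ((X 0 * X 1)^2 - C α * ((X 0)^2)^3) := by
        simp only [map_sub, map_pow, map_mul, hFX0, hFX1]
        rw [show F (C α) = algebraMap ℂ (quotRing α) α from aeval_C _ _, hCα]
      rw [h1, show ((X 0 * X 1)^2 - C α * ((X 0)^2)^3 : MvPolynomial (Fin 2) ℂ)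
          = (X 0)^2 * ((X 1)^2 - C α * (X 0)^4) from by ring, hmkI]
      exact Ideal.Quotient.eq_zero_iff_mem.mpr
        (Ideal.mul_mem_left _ _ (Ideal.subset_span (Set.mem_singleton _)))
    intro q hq
    obtain ⟨c, rfl⟩ := Ideal.mem_span_singleton.mp hq
    rw [map_mul, hFg, zero_mul]
  let e : cuspRing α →ₐ[ℂ] quotRing α := Ideal.Quotient.liftₐ _ F hF0
  have he : ∀ q, e (mkJ q) = F q := fun q =>
    DFunLike.congr_fun (Ideal.Quotient.liftₐ_comp _ F hF0) q
  have he0 : e (mkJ (X 0)) = mkI ((X 0)^2) := by rw [he, hFX0]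
  have he1 : e (mkJ (X 1)) = mkI (X 0 * X 1) := by rw [he, hFX1]
  -- σ is induced by τ
  have hσmk : ∀ q, σ (Ideal.Quotient.mk _ q) = Ideal.Quotient.mk _ (CuspAux.τ q) := by
    have hcomp : ((σ : quotRing α →ₐ[ℂ] quotRing α).comp mkI) = mkI.comp CuspAux.τ := by
      apply MvPolynomial.algHom_ext
      intro i
      fin_cases i
      · simp only [AlgHom.coe_comp, Function.comp_apply, CuspAux.τ, aeval_X,
          Matrix.cons_val_zero, map_neg, AlgEquiv.coe_algHom, AlgHom.coe_coe, Fin.zero_eta]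
        exact hx
      · simp only [AlgHom.coe_comp, Function.comp_apply, CuspAux.τ, aeval_X,
          Matrix.cons_val_one, Matrix.head_cons, map_neg, AlgEquiv.coe_algHom, AlgHom.coe_coe, Fin.mk_one]
        exact hy
    intro q
    have h := DFunLike.congr_fun hcomp q
    simpa only [AlgHom.coe_comp, Function.comp_apply, AlgEquiv.coe_algHom, AlgHom.coe_coe, AlgHom.coe_coe, hmkI] using h
  -- range e ⊆ fixed points
  have hσe : ∀ r, σ (e r) = e r := by
    intro r
    obtain ⟨q, rfl⟩ := Ideal.Quotient.mk_surjective r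
    rw [show (Ideal.Quotient.mk (Ideal.span {(X 1)^2 - C α * (X 0)^3}) q : cuspRing α)
        = mkJ q from rfl, he]
    have hcomp : ((σ : quotRing α →ₐ[ℂ] quotRing α).comp F) = F := by
      apply MvPolynomial.algHom_ext
      intro i
      fin_cases i
      · simp only [AlgHom.coe_comp, Function.comp_apply, AlgEquiv.coe_algHom, AlgHom.coe_coe, Fin.zero_eta]
        rw [hFX0, hmkI, hσmk]
        congr 1
        simp [CuspAux.τ]
      · simp only [AlgHom.coe_comp, Function.comp_apply, AlgEquiv.coe_algHom, AlgHom.coe_coe, Fin.mk_one]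
        rw [hFX1, hmkI, hσmk]
        congr 1
        simp [CuspAux.τ]
    have h := DFunLike.congr_fun hcomp q
    simpa only [AlgHom.coe_comp, Function.comp_apply, AlgEquiv.coe_algHom, AlgHom.coe_coe, AlgHom.coe_coe] using h
  -- fixed points ⊆ range e
  have heq_le : ∀ r : quotRing α, σ r = r → r ∈ e.range := by
    intro r hr
    obtain ⟨hh, rfl⟩ := Ideal.Quotient.mk_surjective r
    have hfix : Ideal.Quotient.mk _ (CuspAux.τ hh)
        = (Ideal.Quotient.mk (Ideal.span {(X 1)^2 - C α * (X 0)^4}) hh : quotRing α) := by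
      rw [← hσmk]; exact hr
    set h' : MvPolynomial (Fin 2) ℂ := (2⁻¹ : ℂ) • (hh + CuspAux.τ hh) with hh'
    have hτh' : CuspAux.τ h' = h' := by
      rw [hh', map_smul, map_add, CuspAux.τ_τ, add_comm (CuspAux.τ hh) hh]
    have hmkh' : mkI h' = Ideal.Quotient.mk _ hh := by
      rw [hh', map_smul, map_add, hmkI, hmkI, hfix, ← two_smul ℂ, smul_smul]
      norm_num
    have hadj := CuspAux.even_mem h' hτh'
    have hmem : mkI h' ∈ (Algebra.adjoin ℂ
        ({X 0 ^ 2, X 0 * X 1, X 1 ^ 2} : Set (MvPolynomial (Fin 2) ℂ))).map mkI :=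
      ⟨h', hadj, rfl⟩
    rw [AlgHom.map_adjoin] at hmem
    have hle : Algebra.adjoin ℂ (mkI '' {X 0 ^ 2, X 0 * X 1, X 1 ^ 2}) ≤ e.range := by
      rw [Algebra.adjoin_le_iff]
      rintro s ⟨q, hq, rfl⟩
      simp only [Set.mem_insert_iff, Set.mem_singleton_iff] at hq
      rcases hq with rfl | rfl | rfl
      · exact (AlgHom.mem_range _).mpr ⟨mkJ (X 0), he0⟩
      · exact (AlgHom.mem_range _).mpr ⟨mkJ (X 1), he1⟩
      · have hx1 : mkI ((X 1)^2) = (algebraMap ℂ (quotRing α) α) * (mkI ((X 0)^2))^2 := by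
          rw [hCα, ← map_pow, ← map_mul, hmkI, hmkI]
          refine Ideal.Quotient.eq.mpr ?_
          rw [show ((X 1)^2 - C α * ((X 0)^2)^2 : MvPolynomial (Fin 2) ℂ)
              = (X 1)^2 - C α * (X 0)^4 from by ring]
          exact Ideal.subset_span (Set.mem_singleton _)
        rw [hx1]
        exact Subalgebra.mul_mem _ (Subalgebra.algebraMap_mem _ _)
          (Subalgebra.pow_mem _ ((AlgHom.mem_range _).mpr ⟨mkJ (X 0), he0⟩) 2)
    have hfin := hle hmem
    rwa [hmkh'] at hfin
  -- injectivity
  have hG0 : ∀ q ∈ Ideal.span {(X 1)^2 - C α * (X 0)^4},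
      (aeval ![(Polynomial.X : Polynomial ℂ), Polynomial.C β * Polynomial.X^2]) q = 0 := by
    have hGg : (aeval ![(Polynomial.X : Polynomial ℂ), Polynomial.C β * Polynomial.X^2])
        ((X 1)^2 - C α * (X 0)^4) = 0 := by
      simp only [map_sub, map_pow, map_mul, aeval_X, aeval_C, Matrix.cons_val_zero,
        Matrix.cons_val_one, Matrix.head_cons, Polynomial.algebraMap_eq]
      rw [← hβ2, map_pow]
      ring
    intro q hq
    obtain ⟨c, rfl⟩ := Ideal.mem_span_singleton.mp hq
    rw [map_mul, hGg, zero_mul]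
  let π : quotRing α →ₐ[ℂ] Polynomial ℂ := Ideal.Quotient.liftₐ _ _ hG0
  have hπ : ∀ q, π (mkI q)
      = (aeval ![(Polynomial.X : Polynomial ℂ), Polynomial.C β * Polynomial.X^2]) q := fun q =>
    DFunLike.congr_fun (Ideal.Quotient.liftₐ_comp _ _ hG0) q
  have hπe : ∀ q, π (e (mkJ q))
      = aeval ![(Polynomial.X : Polynomial ℂ)^2, Polynomial.C β * Polynomial.X^3] q := by
    have hcomp : (π.comp F)
        = aeval ![(Polynomial.X : Polynomial ℂ)^2, Polynomial.C β * Polynomial.X^3] := by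
      apply MvPolynomial.algHom_ext
      intro i
      fin_cases i
      · simp only [AlgHom.coe_comp, Function.comp_apply, Fin.zero_eta, aeval_X,
          Matrix.cons_val_zero]
        rw [hFX0, hπ]
        simp
      · simp only [AlgHom.coe_comp, Function.comp_apply, Fin.mk_one, aeval_X,
          Matrix.cons_val_one, Matrix.head_cons]
        rw [hFX1, hπ]
        simp
        ring
    intro q
    rw [he]
    exact DFunLike.congr_fun hcomp q
  have hinj : Function.Injective e := by
    rw [injective_iff_map_eq_zero]
    intro r hr
    obtain ⟨p, rfl⟩ := Ideal.Quotient.mk_surjective r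
    have h1 : π (e (mkJ p)) = 0 := by
      rw [show mkJ p = (Ideal.Quotient.mk (Ideal.span {(X 1)^2 - C α * (X 0)^3}) p : cuspRing α)
        from rfl, hr, map_zero]
    rw [hπe] at h1
    have hp := CuspAux.cusp_ker α β hβ2 hβ p h1
    exact Ideal.Quotient.eq_zero_iff_mem.mpr hp
  refine ⟨e, hinj, ?_, he0, he1⟩
  apply le_antisymm
  · rintro s hs
    obtain ⟨r, rfl⟩ := (AlgHom.mem_range _).mp hs
    refine (AlgHom.mem_equalizer _ _ _).mpr ?_
    simpa using hσe r
  · intro r hr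
    have h := (AlgHom.mem_equalizer _ _ _).mp hr
    simp only [AlgHom.coe_id, id_eq, AlgEquiv.coe_algHom, AlgHom.coe_coe, AlgHom.coe_coe] at h
    exact heq_le r h
end
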